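/- In the rational function field 𝔽₂(z), the set S = { p*(z)/p(z) : p ∈ 𝔽₂[z], p ≠ 0, deg p < n } (with p*(z) = z^{n−1}p(1/z)) equals the set T = { z^k · ũ(z)/u(z) : u ∈ 𝔽₂[z], deg u < n, u(0) = 1, gcd(u, ũ) = 1, |k| ≤ n−1−deg u }, where ũ(z) = z^{deg u} u(1/z) and k ranges over integers. Moreover, each element of T is uniquely determined by the pair (k, u). -/

import Mathlib

/-!
Write `p = X^a · q` with `q(0) ≠ 0`, and split off `g = gcd(q, q̃)`. Over `𝔽₂` this gcd is
self-reciprocal (`g̃ ∣ g`, both are monic of the same degree), so `q = g·m` with `m` coprime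
to `m̃`, and `p*/p = z^k m̃/m` with `k = n - 1 - 2a - deg q`. Conversely `z^k ũ/u` is `p*/p`
for `p = X^a (X+1)^ε u` where `n - 1 - deg u - k = 2a + ε`, since `X + 1` is self-reciprocal.
Uniqueness: clearing denominators gives `z^d ũ w = u w̃` with `d ≥ 0`; the right side has
nonzero constant term, so `d = 0`, and coprimality then forces `u ∣ w ∣ u`.
-/

open Polynomial

namespace Polynomial

section Semiring

variable {R : Type*} [Semiring R] {p q : R[X]}

theorem reflect_eq_reverse_mul_X_pow {N : ℕ} (h : p.natDegree ≤ N) :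
    p.reflect N = p.reverse * X ^ (N - p.natDegree) := by
  have h1 : (1 : R[X]).natDegree ≤ N - p.natDegree := by simp
  have := reflect_mul p 1 le_rfl h1
  rw [mul_one, reflect_one] at this
  rw [reverse, ← this]
  congr 1
  omega

theorem ne_zero_of_coeff_zero_ne_zero (h : p.coeff 0 ≠ 0) : p ≠ 0 := by
  rintro rfl
  exact h (coeff_zero 0)

theorem reverse_eq_mirror_of_coeff_zero_ne_zero (h : p.coeff 0 ≠ 0) : p.reverse = p.mirror := by
  rw [mirror, natTrailingDegree_eq_zero.mpr (Or.inr h), pow_zero, mul_one]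

theorem natDegree_reverse_of_coeff_zero_ne_zero (h : p.coeff 0 ≠ 0) :
    p.reverse.natDegree = p.natDegree := by
  rw [reverse_eq_mirror_of_coeff_zero_ne_zero h, mirror_natDegree]

theorem reverse_reverse_of_coeff_zero_ne_zero (h : p.coeff 0 ≠ 0) : p.reverse.reverse = p := by
  have h' : p.reverse.coeff 0 ≠ 0 := by
    rw [coeff_zero_reverse, leadingCoeff_ne_zero]
    exact ne_zero_of_coeff_zero_ne_zero h
  rw [reverse_eq_mirror_of_coeff_zero_ne_zero h', reverse_eq_mirror_of_coeff_zero_ne_zero h,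
    mirror_mirror]

theorem reverse_X_add_one [Nontrivial R] : ((X : R[X]) + 1).reverse = X + 1 := by
  have h1 : (1 : R[X]).reverse = 1 := by simpa using reverse_C (1 : R)
  have hX : (X : R[X]).reverse = 1 := by simpa [h1] using reverse_X_mul (1 : R[X])
  rw [← C_1, reverse_add_C, natDegree_X, pow_one, C_1, one_mul, hX, add_comm]

variable [NoZeroDivisors R]

theorem reverse_dvd_reverse (h : p ∣ q) : p.reverse ∣ q.reverse := by
  obtain ⟨r, rfl⟩ := h
  exact ⟨r.reverse, reverse_mul_of_domain p r⟩

theorem reverse_X_add_one_pow [Nontrivial R] (e : ℕ) :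
    (((X : R[X]) + 1) ^ e).reverse = (X + 1) ^ e := by
  induction e with
  | zero => simpa using reverse_C (1 : R)
  | succ e ih => rw [pow_succ, reverse_mul_of_domain, ih, reverse_X_add_one]

end Semiring

theorem associated_of_reverse_mul_eq_mul_reverse {R : Type*} [CommRing R] [IsDomain R]
    {u w : R[X]} (hu : IsCoprime u u.reverse) (hw : IsCoprime w w.reverse)
    (h : u.reverse * w = u * w.reverse) : Associated u w :=
  associated_of_dvd_dvd (hu.dvd_of_dvd_mul_left ⟨w.reverse, h⟩)
    (hw.dvd_of_dvd_mul_left ⟨u.reverse, by rw [mul_comm, ← h, mul_comm]⟩)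

section Field

variable {K : Type*} [Field K]

theorem reflect_div_eq_X_zpow_mul_reverse_div {N a : ℕ} {c u : K[X]} (hc : c.reverse = c)
    (hc0 : c ≠ 0) (hu : u ≠ 0) (h : a + c.natDegree + u.natDegree ≤ N) :
    algebraMap K[X] (RatFunc K) ((X ^ a * (c * u)).reflect N) /
        algebraMap K[X] (RatFunc K) (X ^ a * (c * u)) =
      RatFunc.X ^ ((N : ℤ) - 2 * a - c.natDegree - u.natDegree) *
        algebraMap K[X] (RatFunc K) u.reverse / algebraMap K[X] (RatFunc K) u := by
  have hdeg : (X ^ a * (c * u)).natDegree = a + c.natDegree + u.natDegree := by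
    rw [natDegree_mul (pow_ne_zero _ X_ne_zero) (mul_ne_zero hc0 hu), natDegree_X_pow,
      natDegree_mul hc0 hu, add_assoc]
  have hrefl : (X ^ a * (c * u)).reflect N =
      X ^ (N - (a + c.natDegree + u.natDegree)) * (c * u.reverse) := by
    rw [reflect_eq_reverse_mul_X_pow (hdeg ▸ h), reverse_X_pow_mul, reverse_mul_of_domain, hc,
      hdeg, mul_comm]
  have hX : (RatFunc.X : RatFunc K) ≠ 0 := RatFunc.X_ne_zero
  have hc' := RatFunc.algebraMap_ne_zero hc0
  have hu' := RatFunc.algebraMap_ne_zero hu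
  have hexp : (N : ℤ) - 2 * a - c.natDegree - u.natDegree =
      ((N - (a + c.natDegree + u.natDegree) : ℕ) : ℤ) - a := by omega
  rw [hrefl, hexp, zpow_sub₀ hX, zpow_natCast, zpow_natCast]
  simp only [map_mul, map_pow, RatFunc.algebraMap_X]
  field_simp

theorem exists_reflect_div_eq_X_zpow_mul_reverse_div {n : ℕ} {k : ℤ} {u : K[X]} (hu : u ≠ 0)
    (hun : u.natDegree < n) (hk : k.natAbs + u.natDegree ≤ n - 1) :
    ∃ p : K[X], p ≠ 0 ∧ p.natDegree < n ∧
      RatFunc.X ^ k * algebraMap K[X] (RatFunc K) u.reverse / algebraMap K[X] (RatFunc K) u =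
        algebraMap K[X] (RatFunc K) (p.reflect (n - 1)) / algebraMap K[X] (RatFunc K) p := by
  -- `p = X^a (X + 1)^ε u` where `n - 1 - deg u - k = 2a + ε`, `ε ∈ {0, 1}`
  set e := ((n - 1 - u.natDegree : ℕ) - k).toNat
  have hX1 : (X + 1 : K[X]) ≠ 0 := X_add_C_ne_zero 1
  have hdeg : ((X + 1 : K[X]) ^ (e % 2)).natDegree = e % 2 := by
    rw [natDegree_pow, ← C_1, natDegree_X_add_C, mul_one]
  refine ⟨X ^ (e / 2) * ((X + 1) ^ (e % 2) * u),
    mul_ne_zero (pow_ne_zero _ X_ne_zero) (mul_ne_zero (pow_ne_zero _ hX1) hu), ?_, ?_⟩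
  · rw [natDegree_mul (pow_ne_zero _ X_ne_zero) (mul_ne_zero (pow_ne_zero _ hX1) hu),
      natDegree_X_pow, natDegree_mul (pow_ne_zero _ hX1) hu, hdeg]
    omega
  · rw [reflect_div_eq_X_zpow_mul_reverse_div (reverse_X_add_one_pow _) (pow_ne_zero _ hX1) hu
      (by omega), hdeg]
    congr 3
    omega

theorem eq_and_associated_of_X_zpow_mul_reverse_div_eq {k l : ℤ} {u w : K[X]}
    (hu0 : u.coeff 0 ≠ 0) (hw0 : w.coeff 0 ≠ 0) (hu : IsCoprime u u.reverse)
    (hw : IsCoprime w w.reverse)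
    (h : RatFunc.X ^ k * algebraMap K[X] (RatFunc K) u.reverse / algebraMap K[X] (RatFunc K) u =
      RatFunc.X ^ l * algebraMap K[X] (RatFunc K) w.reverse / algebraMap K[X] (RatFunc K) w) :
    k = l ∧ Associated u w := by
  wlog hlk : l ≤ k generalizing k l u w
  · obtain ⟨hkl, huw⟩ := this hw0 hu0 hw hu h.symm (by omega)
    exact ⟨hkl.symm, huw.symm⟩
  obtain ⟨d, rfl⟩ : ∃ d : ℕ, k = l + d := ⟨(k - l).toNat, by omega⟩
  have hX : (RatFunc.X : RatFunc K) ≠ 0 := RatFunc.X_ne_zero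
  have hpoly : X ^ d * (u.reverse * w) = u * w.reverse := by
    apply RatFunc.algebraMap_injective K
    rw [div_eq_div_iff (RatFunc.algebraMap_ne_zero (ne_zero_of_coeff_zero_ne_zero hu0))
      (RatFunc.algebraMap_ne_zero (ne_zero_of_coeff_zero_ne_zero hw0)), zpow_add₀ hX,
      zpow_natCast] at h
    simp only [map_mul, map_pow, RatFunc.algebraMap_X]
    apply mul_left_cancel₀ (zpow_ne_zero l hX)
    linear_combination h
  -- the right-hand side has constant term `u(0) · lc(w) ≠ 0`, so it is not divisible by `X`
  have hd : d = 0 := by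
    by_contra hd
    have hXdvd : (X : K[X]) ∣ u * w.reverse := hpoly ▸ (dvd_pow_self X hd).mul_right _
    rw [X_dvd_iff, mul_coeff_zero, coeff_zero_reverse] at hXdvd
    exact mul_ne_zero hu0 (leadingCoeff_ne_zero.mpr (ne_zero_of_coeff_zero_ne_zero hw0)) hXdvd
  rw [hd, pow_zero, one_mul] at hpoly
  exact ⟨by omega, associated_of_reverse_mul_eq_mul_reverse hu hw hpoly⟩

end Field

section ZModTwo

theorem zmod_two_eq_one_of_ne_zero {x : ZMod 2} (hx : x ≠ 0) : x = 1 := by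
  revert x
  decide

theorem monic_of_ne_zero_zmod_two {p : (ZMod 2)[X]} (hp : p ≠ 0) : p.Monic :=
  zmod_two_eq_one_of_ne_zero (leadingCoeff_ne_zero.mpr hp)

theorem reverse_gcd_self_reverse {q : (ZMod 2)[X]} (hq : q.coeff 0 ≠ 0) :
    (gcd q q.reverse).reverse = gcd q q.reverse := by
  have hg0 : (gcd q q.reverse).coeff 0 ≠ 0 := fun h =>
    hq (X_dvd_iff.mp ((X_dvd_iff.mpr h).trans (gcd_dvd_left _ _)))
  have hgg : (gcd q q.reverse).reverse ∣ gcd q q.reverse := by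
    refine dvd_gcd ?_ (reverse_dvd_reverse (gcd_dvd_left _ _))
    conv_rhs => rw [← reverse_reverse_of_coeff_zero_ne_zero hq]
    exact reverse_dvd_reverse (gcd_dvd_right _ _)
  have hg : gcd q q.reverse ≠ 0 := ne_zero_of_coeff_zero_ne_zero hg0
  exact (eq_of_monic_of_dvd_of_natDegree_le
    (monic_of_ne_zero_zmod_two (reverse_eq_zero.not.mpr hg)) (monic_of_ne_zero_zmod_two hg) hgg
    (natDegree_reverse_of_coeff_zero_ne_zero hg0).ge).symm

theorem exists_eq_mul_reverse_eq_self_isCoprime {q : (ZMod 2)[X]} (hq : q.coeff 0 ≠ 0) :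
    ∃ g m : (ZMod 2)[X], q = g * m ∧ g.reverse = g ∧ IsCoprime m m.reverse := by
  obtain ⟨m, m', hm, hm', hunit⟩ := extract_gcd q q.reverse
  have hg0 : gcd q q.reverse ≠ 0 := gcd_ne_zero_of_left (ne_zero_of_coeff_zero_ne_zero hq)
  have hg := reverse_gcd_self_reverse hq
  generalize gcd q q.reverse = g at *
  refine ⟨g, m, hm, hg, ?_⟩
  have hm'm : m' = m.reverse := by
    apply mul_left_cancel₀ hg0
    rw [← hm', hm, reverse_mul_of_domain, hg]
  rwa [← hm'm, ← gcd_isUnit_iff]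

theorem exists_X_zpow_mul_reverse_div_eq_reflect_div {n : ℕ} {p : (ZMod 2)[X]} (hp : p ≠ 0)
    (hpn : p.natDegree < n) :
    ∃ (k : ℤ) (u : (ZMod 2)[X]), u.natDegree < n ∧ u.coeff 0 = 1 ∧ IsCoprime u u.reverse ∧
      k.natAbs + u.natDegree ≤ n - 1 ∧
      algebraMap _ (RatFunc (ZMod 2)) (p.reflect (n - 1)) / algebraMap _ _ p =
        RatFunc.X ^ k * algebraMap _ _ u.reverse / algebraMap _ _ u := by
  obtain ⟨q, hpq, hXq⟩ := p.exists_eq_pow_rootMultiplicity_mul_and_not_dvd hp 0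
  rw [C_0, sub_zero] at hpq hXq
  have hq0 : q.coeff 0 ≠ 0 := fun h => hXq (X_dvd_iff.mpr h)
  generalize p.rootMultiplicity 0 = a at hpq
  subst hpq
  obtain ⟨g, m, rfl, hg, hm⟩ := exists_eq_mul_reverse_eq_self_isCoprime hq0
  rw [mul_coeff_zero] at hq0
  have hg0 : g ≠ 0 := ne_zero_of_coeff_zero_ne_zero (left_ne_zero_of_mul hq0)
  have hm0 : m ≠ 0 := ne_zero_of_coeff_zero_ne_zero (right_ne_zero_of_mul hq0)
  have hdeg : (X ^ a * (g * m)).natDegree = a + g.natDegree + m.natDegree := by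
    rw [natDegree_mul (pow_ne_zero _ X_ne_zero) (mul_ne_zero hg0 hm0), natDegree_X_pow,
      natDegree_mul hg0 hm0, add_assoc]
  refine ⟨(n - 1 : ℕ) - 2 * a - g.natDegree - m.natDegree, m, by omega,
    zmod_two_eq_one_of_ne_zero (right_ne_zero_of_mul hq0), hm, by omega, ?_⟩
  exact reflect_div_eq_X_zpow_mul_reverse_div hg hg0 hm0 (by omega)

end ZModTwo

end Polynomial

/-- In `𝔽₂(z)`, the set `S = { p*/p : 0 ≠ p ∈ 𝔽₂[z], deg p < n }` (with
`p* = z^(n−1) p(1/z) = reflect (n−1) p`) equals the set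
`T = { z^k · ũ/u : deg u < n, u(0) = 1, gcd(u, ũ) = 1, |k| ≤ n−1−deg u }`,
and each element of `T` is uniquely determined by the pair `(k, u)`. -/
theorem stmt11 (n : ℕ) :
    ({x : RatFunc (ZMod 2) | ∃ p : Polynomial (ZMod 2), p ≠ 0 ∧ p.natDegree < n ∧
        x = (algebraMap (Polynomial (ZMod 2)) (RatFunc (ZMod 2)) (p.reflect (n - 1))) /
            (algebraMap (Polynomial (ZMod 2)) (RatFunc (ZMod 2)) p)}
      = {x : RatFunc (ZMod 2) | ∃ (k : ℤ) (u : Polynomial (ZMod 2)),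
          u.natDegree < n ∧ u.coeff 0 = 1 ∧ IsCoprime u u.reverse ∧
          k.natAbs + u.natDegree ≤ n - 1 ∧
          x = (RatFunc.X : RatFunc (ZMod 2)) ^ k *
              (algebraMap (Polynomial (ZMod 2)) (RatFunc (ZMod 2)) u.reverse) /
              (algebraMap (Polynomial (ZMod 2)) (RatFunc (ZMod 2)) u)}) ∧
    (∀ (k l : ℤ) (u w : Polynomial (ZMod 2)),
      u.natDegree < n → u.coeff 0 = 1 → IsCoprime u u.reverse →
        k.natAbs + u.natDegree ≤ n - 1 →
      w.natDegree < n → w.coeff 0 = 1 → IsCoprime w w.reverse →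
        l.natAbs + w.natDegree ≤ n - 1 →
      (RatFunc.X : RatFunc (ZMod 2)) ^ k *
          (algebraMap (Polynomial (ZMod 2)) (RatFunc (ZMod 2)) u.reverse) /
          (algebraMap (Polynomial (ZMod 2)) (RatFunc (ZMod 2)) u)
        = (RatFunc.X : RatFunc (ZMod 2)) ^ l *
          (algebraMap (Polynomial (ZMod 2)) (RatFunc (ZMod 2)) w.reverse) /
          (algebraMap (Polynomial (ZMod 2)) (RatFunc (ZMod 2)) w) →
      k = l ∧ u = w) := by
  refine ⟨Set.ext fun x => ⟨?_, ?_⟩, ?_⟩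
  · rintro ⟨p, hp, hpn, rfl⟩
    exact exists_X_zpow_mul_reverse_div_eq_reflect_div hp hpn
  · rintro ⟨k, u, hun, hu0, -, hk, rfl⟩
    exact exists_reflect_div_eq_X_zpow_mul_reverse_div
      (ne_zero_of_coeff_zero_ne_zero (hu0 ▸ one_ne_zero)) hun hk
  · intro k l u w _ hu0 hu _ _ hw0 hw _ h
    have hu0' : u.coeff 0 ≠ 0 := hu0 ▸ one_ne_zero
    have hw0' : w.coeff 0 ≠ 0 := hw0 ▸ one_ne_zero
    obtain ⟨hkl, huw⟩ := eq_and_associated_of_X_zpow_mul_reverse_div_eq hu0' hw0' hu hw h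
    exact ⟨hkl, eq_of_monic_of_associated
      (monic_of_ne_zero_zmod_two (ne_zero_of_coeff_zero_ne_zero hu0'))
      (monic_of_ne_zero_zmod_two (ne_zero_of_coeff_zero_ne_zero hw0')) huw⟩
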